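/- arXiv:2307.08555 — 7 statements merged into one kernel-verified Lean document; each statement's English description precedes it below -/
import Mathlib

section
/- Let G = (V, E) be a minimally k-hyperedge-connected (multi-)hypergraph with |V| ≥ 2, where k is a positive integer. Then there exists a vertex u ∈ V such that d_G(u) = k. -/
/-- Cut function of a (multi-)hypergraph: the number of hyperedges (indexed by `E`)
crossing the vertex set `X`. -/
def hcut {V ι : Type*} [DecidableEq V] (E : Finset ι) (edge : ι → Finset V)
    (X : Finset V) : ℕ :=
  (E.filter fun i => (edge i ∩ X).Nonempty ∧ (edge i \ X).Nonempty).card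

/-- A hypergraph is `k`-hyperedge-connected if every nonempty proper vertex subset
has cut value at least `k`. -/
def KEdgeConnected {V ι : Type*} [Fintype V] [DecidableEq V]
    (E : Finset ι) (edge : ι → Finset V) (k : ℕ) : Prop :=
  ∀ X : Finset V, X.Nonempty → X ≠ Finset.univ → k ≤ hcut E edge X

/-!
Take a tight set `X` (one with `d(X) = k`) that is minimal under inclusion. By minimality of the
hypergraph every hyperedge `e` crosses some tight set `Y`. If `e ⊆ X`, then either `Y ⊊ X`, or
posimodularity `d(X \ Y) + d(Y \ X) ≤ d(X) + d(Y) = 2k` makes `X \ Y ⊊ X` tight; both contradict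
minimality. So every hyperedge through a vertex `u ∈ X` leaves `X`, whence `k ≤ d(u) ≤ d(X) = k`.
-/

section Crossing

variable {V ι : Type*} [DecidableEq V]

def Crosses (e X : Finset V) : Prop := (e ∩ X).Nonempty ∧ (e \ X).Nonempty

instance (e X : Finset V) : Decidable (Crosses e X) := inferInstanceAs (Decidable (_ ∧ _))

theorem Crosses.of_sdiff {e X Y : Finset V} (h : Crosses e (X \ Y)) :
    Crosses e X ∨ Crosses e Y := by
  obtain ⟨⟨a, ha⟩, ⟨c, hc⟩⟩ := h
  simp only [Finset.mem_inter, Finset.mem_sdiff, not_and_or, not_not] at ha hc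
  by_cases hcX : c ∈ X
  · exact .inr ⟨⟨c, by grind⟩, ⟨a, by grind⟩⟩
  · exact .inl ⟨⟨a, by grind⟩, ⟨c, by grind⟩⟩

theorem Crosses.of_sdiff_of_sdiff {e X Y : Finset V} (h₁ : Crosses e (X \ Y))
    (h₂ : Crosses e (Y \ X)) : Crosses e X ∧ Crosses e Y := by
  obtain ⟨⟨a, ha⟩, -⟩ := h₁
  obtain ⟨⟨b, hb⟩, -⟩ := h₂
  simp only [Finset.mem_inter, Finset.mem_sdiff] at ha hb
  exact ⟨⟨⟨a, by grind⟩, ⟨b, by grind⟩⟩, ⟨⟨b, by grind⟩, ⟨a, by grind⟩⟩⟩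

theorem hcut_eq_sum (E : Finset ι) (edge : ι → Finset V) (X : Finset V) :
    hcut E edge X = ∑ i ∈ E, if Crosses (edge i) X then 1 else 0 :=
  Finset.card_filter _ _

theorem hcut_sdiff_add_hcut_sdiff_le (E : Finset ι) (edge : ι → Finset V) (X Y : Finset V) :
    hcut E edge (X \ Y) + hcut E edge (Y \ X) ≤ hcut E edge X + hcut E edge Y := by
  simp only [hcut_eq_sum, ← Finset.sum_add_distrib]
  refine Finset.sum_le_sum fun i _ => ?_
  by_cases h₁ : Crosses (edge i) (X \ Y) <;> by_cases h₂ : Crosses (edge i) (Y \ X)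
  · obtain ⟨hX, hY⟩ := h₁.of_sdiff_of_sdiff h₂
    simp [h₁, h₂, hX, hY]
  · rcases h₁.of_sdiff with h | h <;> simp [h₁, h₂, h]
  · rcases h₂.of_sdiff with h | h <;> simp [h₁, h₂, h]
  · simp [h₁, h₂]

theorem hcut_erase [DecidableEq ι] (E : Finset ι) (edge : ι → Finset V) (X : Finset V)
    {i : ι} (hi : i ∈ E) :
    hcut E edge X = hcut (E.erase i) edge X + if Crosses (edge i) X then 1 else 0 := by
  simp only [hcut_eq_sum]
  exact (Finset.sum_erase_add E _ hi).symm

theorem hcut_singleton_le {E : Finset ι} {edge : ι → Finset V} {X : Finset V} {u : V}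
    (hu : u ∈ X) (hE : ∀ i ∈ E, u ∈ edge i → ¬edge i ⊆ X) :
    hcut E edge {u} ≤ hcut E edge X := by
  refine Finset.card_le_card fun i hi => ?_
  simp only [Finset.mem_filter] at hi ⊢
  obtain ⟨hiE, ⟨a, ha⟩, -⟩ := hi
  obtain ⟨hae, rfl⟩ : a ∈ edge i ∧ a = u := by simpa using ha
  obtain ⟨w, hw, hwX⟩ := Finset.not_subset.mp (hE i hiE hae)
  exact ⟨hiE, ⟨a, Finset.mem_inter.mpr ⟨hae, hu⟩⟩, ⟨w, Finset.mem_sdiff.mpr ⟨hw, hwX⟩⟩⟩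

end Crossing

section Tight

variable {V ι : Type*} [Fintype V] [DecidableEq V] {E : Finset ι} {edge : ι → Finset V} {k : ℕ}

def IsTight (E : Finset ι) (edge : ι → Finset V) (k : ℕ) (X : Finset V) : Prop :=
  X.Nonempty ∧ X ≠ Finset.univ ∧ hcut E edge X = k

theorem exists_isTight_crosses [DecidableEq ι] (hconn : KEdgeConnected E edge k)
    {i : ι} (hi : i ∈ E) (hi' : ¬KEdgeConnected (E.erase i) edge k) :
    ∃ Y, IsTight E edge k Y ∧ Crosses (edge i) Y := by
  simp only [KEdgeConnected, not_forall, not_le] at hi'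
  obtain ⟨Y, hY, hYu, hlt⟩ := hi'
  have hle := hconn Y hY hYu
  have hsplit := hcut_erase E edge Y hi
  by_cases hc : Crosses (edge i) Y
  · exact ⟨Y, ⟨hY, hYu, by grind⟩, hc⟩
  · grind

theorem IsTight.sdiff (hconn : KEdgeConnected E edge k) {X Y : Finset V}
    (hX : IsTight E edge k X) (hY : IsTight E edge k Y) (hXY : (X ∩ Y).Nonempty)
    (hXY' : (X \ Y).Nonempty) (hYX : (Y \ X).Nonempty) : IsTight E edge k (X \ Y) := by
  obtain ⟨a, ha⟩ := hXY
  rw [Finset.mem_inter] at ha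
  have hXYu : X \ Y ≠ Finset.univ := fun h =>
    (Finset.mem_sdiff.mp (Finset.eq_univ_iff_forall.mp h a)).2 ha.2
  have hYXu : Y \ X ≠ Finset.univ := fun h =>
    (Finset.mem_sdiff.mp (Finset.eq_univ_iff_forall.mp h a)).2 ha.1
  have h₁ := hconn _ hXY' hXYu
  have h₂ := hconn _ hYX hYXu
  have hpos := hcut_sdiff_add_hcut_sdiff_le E edge X Y
  exact ⟨hXY', hXYu, by grind [IsTight]⟩

theorem Minimal.not_subset_of_crosses (hconn : KEdgeConnected E edge k) {X Y e : Finset V}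
    (hX : Minimal (IsTight E edge k) X) (hY : IsTight E edge k Y) (he : Crosses e Y) :
    ¬e ⊆ X := by
  intro heX
  obtain ⟨⟨a, ha⟩, ⟨b, hb⟩⟩ := he
  rw [Finset.mem_inter] at ha
  rw [Finset.mem_sdiff] at hb
  by_cases hYX : Y ⊆ X
  · -- `b ∈ X \ Y` witnesses `Y ≠ X`
    exact hX.not_lt hY (Finset.ssubset_iff_subset_ne.mpr ⟨hYX, by grind⟩)
  · -- `a ∈ X ∩ Y` witnesses `X \ Y ≠ X`
    have hXY := hX.prop.sdiff hconn hY ⟨a, by grind⟩ ⟨b, by grind⟩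
      (Finset.sdiff_nonempty.mpr hYX)
    exact hX.not_lt hXY (Finset.ssubset_iff_subset_ne.mpr ⟨Finset.sdiff_subset, by grind⟩)

end Tight

theorem minimally_kEC_has_degree_k_vertex_general {V ι : Type*} [Fintype V] [DecidableEq V]
    [DecidableEq ι] (E : Finset ι) (edge : ι → Finset V) (k : ℕ)
    (hV : 2 ≤ Fintype.card V)
    (hconn : KEdgeConnected E edge k)
    (hmin : ∀ i ∈ E, ¬ KEdgeConnected (E.erase i) edge k) :
    ∃ u : V, hcut E edge {u} = k := by
  have hsingle (u : V) : ({u} : Finset V) ≠ Finset.univ := by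
    obtain ⟨v, hv⟩ := Fintype.exists_ne_of_one_lt_card (by omega) u
    exact fun h => hv (Finset.mem_singleton.mp (h ▸ Finset.mem_univ v))
  have hdeg (u : V) : k ≤ hcut E edge {u} := hconn _ (Finset.singleton_nonempty u) (hsingle u)
  obtain rfl | ⟨i₀, hi₀⟩ := E.eq_empty_or_nonempty
  · obtain ⟨u⟩ := Fintype.card_pos_iff.mp (by omega : 0 < Fintype.card V)
    exact ⟨u, by simpa [hcut, eq_comm] using hdeg u⟩
  obtain ⟨Y, hY, -⟩ := exists_isTight_crosses hconn hi₀ (hmin i₀ hi₀)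
  obtain ⟨X, hX⟩ := exists_minimal_of_wellFoundedLT _ ⟨Y, hY⟩
  obtain ⟨u, hu⟩ := hX.prop.1
  have hleave (i : ι) (hi : i ∈ E) (_ : u ∈ edge i) : ¬edge i ⊆ X := by
    obtain ⟨Z, hZ, hcross⟩ := exists_isTight_crosses hconn hi (hmin i hi)
    exact hX.not_subset_of_crosses hconn hZ hcross
  exact ⟨u, le_antisymm (hX.prop.2.2 ▸ hcut_singleton_le hu hleave) (hdeg u)⟩

/-- A minimally `k`-hyperedge-connected hypergraph with at least two vertices
has a vertex of degree exactly `k`. -/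
theorem minimally_kEC_has_degree_k_vertex {V ι : Type*} [Fintype V] [DecidableEq V]
    [DecidableEq ι] (E : Finset ι) (edge : ι → Finset V) (k : ℕ) (hk : 0 < k)
    (hV : 2 ≤ Fintype.card V)
    (hconn : KEdgeConnected E edge k)
    (hmin : ∀ i ∈ E, ¬ KEdgeConnected (E.erase i) edge k) :
    ∃ u : V, hcut E edge {u} = k :=
  minimally_kEC_has_degree_k_vertex_general E edge k hV hconn hmin
end

section
/- Let p : 2^V → ℤ be a skew-supermodular set function and (H = (V, E), w : E → ℤ₊) a weighted hypergraph with b_{(H,w)}(Z) ≥ p(Z) for all Z ⊆ V. Let X, Y ⊆ V be tight (i.e., b_{(H,w)}(X) = p(X) and b_{(H,w)}(Y) = p(Y)) with X ∩ Y ≠ ∅. If there exists a hyperedge e ∈ E with positive weight intersecting X ∩ Y and intersecting at most one of X − Y and Y − X, then X ∪ Y and X ∩ Y are both tight. -/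
/-!
Coverage functions of hypergraphs with nonnegative weights are submodular and posimodular,
hyperedge by hyperedge. If `p` satisfies the submodular-type inequality at `X, Y`, then
`p (X ∩ Y) + p (X ∪ Y) ≥ p X + p Y = b X + b Y ≥ b (X ∩ Y) + b (X ∪ Y)`, and `b ≥ p` forces
equality in both places. The other alternative of skew-supermodularity is impossible: the given
hyperedge `e` meets both `X` and `Y` but at most one of `X − Y`, `Y − X`, so its positive
weight is counted twice on the right of posimodularity and at most once on the left,
`b (X − Y) + b (Y − X) < b X + b Y = p X + p Y ≤ p (X − Y) + p (Y − X)`.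
-/

/-- Coverage function of a weighted hypergraph: total weight of hyperedges
intersecting `X`. -/
def coverage {V : Type*} [DecidableEq V] (E : Finset (Finset V)) (w : Finset V → ℕ)
    (X : Finset V) : ℤ :=
  ∑ e ∈ E.filter (fun e => (e ∩ X).Nonempty), (w e : ℤ)

/-- A set function is skew-supermodular if one of the two supermodular-type
inequalities holds for every pair of sets. -/
def SkewSupermodular {V : Type*} [DecidableEq V] (p : Finset V → ℤ) : Prop :=
  ∀ X Y : Finset V, p X + p Y ≤ p (X ∩ Y) + p (X ∪ Y) ∨
    p X + p Y ≤ p (X \ Y) + p (Y \ X)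

namespace Finset

variable {V : Type*} [DecidableEq V]

lemma nonempty_inter_union_iff {f X Y : Finset V} :
    (f ∩ (X ∪ Y)).Nonempty ↔ (f ∩ X).Nonempty ∨ (f ∩ Y).Nonempty := by
  rw [inter_union_distrib_left, union_nonempty]

lemma Nonempty.inter_left_of_inter_inter {f X Y : Finset V} (h : (f ∩ (X ∩ Y)).Nonempty) :
    (f ∩ X).Nonempty :=
  h.mono (inter_subset_inter_left inter_subset_left)

lemma Nonempty.inter_right_of_inter_inter {f X Y : Finset V} (h : (f ∩ (X ∩ Y)).Nonempty) :
    (f ∩ Y).Nonempty :=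
  h.mono (inter_subset_inter_left inter_subset_right)

lemma Nonempty.inter_of_inter_sdiff {f X Y : Finset V} (h : (f ∩ (X \ Y)).Nonempty) :
    (f ∩ X).Nonempty :=
  h.mono (inter_subset_inter_left sdiff_subset)

end Finset

open Finset

section Coverage

variable {V : Type*} [DecidableEq V] (E : Finset (Finset V)) (w : Finset V → ℕ)

def hitWeight (f X : Finset V) : ℤ :=
  if (f ∩ X).Nonempty then (w f : ℤ) else 0

lemma coverage_eq_sum_hitWeight (X : Finset V) :
    coverage E w X = ∑ f ∈ E, hitWeight w f X := by
  rw [coverage, sum_filter]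
  rfl

lemma hitWeight_inter_add_hitWeight_union_le (f X Y : Finset V) :
    hitWeight w f (X ∩ Y) + hitWeight w f (X ∪ Y) ≤ hitWeight w f X + hitWeight w f Y := by
  have hwf : (0 : ℤ) ≤ w f := Int.natCast_nonneg _
  have hX : (f ∩ (X ∩ Y)).Nonempty → (f ∩ X).Nonempty := Nonempty.inter_left_of_inter_inter
  have hY : (f ∩ (X ∩ Y)).Nonempty → (f ∩ Y).Nonempty := Nonempty.inter_right_of_inter_inter
  unfold hitWeight
  split_ifs <;> simp_all [nonempty_inter_union_iff]

lemma hitWeight_sdiff_add_hitWeight_sdiff_le (f X Y : Finset V) :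
    hitWeight w f (X \ Y) + hitWeight w f (Y \ X) ≤ hitWeight w f X + hitWeight w f Y := by
  have hwf : (0 : ℤ) ≤ w f := Int.natCast_nonneg _
  have hX : (f ∩ (X \ Y)).Nonempty → (f ∩ X).Nonempty := Nonempty.inter_of_inter_sdiff
  have hY : (f ∩ (Y \ X)).Nonempty → (f ∩ Y).Nonempty := Nonempty.inter_of_inter_sdiff
  unfold hitWeight
  split_ifs <;> simp_all

lemma hitWeight_sdiff_add_hitWeight_sdiff_lt {f X Y : Finset V} (hwf : 0 < w f)
    (hf : (f ∩ (X ∩ Y)).Nonempty) (hside : f ∩ (X \ Y) = ∅ ∨ f ∩ (Y \ X) = ∅) :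
    hitWeight w f (X \ Y) + hitWeight w f (Y \ X) < hitWeight w f X + hitWeight w f Y := by
  have hX := hf.inter_left_of_inter_inter
  have hY := hf.inter_right_of_inter_inter
  unfold hitWeight
  rcases hside with h | h <;> simp only [h, hX, hY, Finset.not_nonempty_empty, ↓reduceIte] <;>
    split_ifs <;> omega

lemma coverage_inter_add_coverage_union_le (X Y : Finset V) :
    coverage E w (X ∩ Y) + coverage E w (X ∪ Y) ≤ coverage E w X + coverage E w Y := by
  simp only [coverage_eq_sum_hitWeight, ← sum_add_distrib]
  exact sum_le_sum fun f _ => hitWeight_inter_add_hitWeight_union_le w f X Y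

lemma coverage_sdiff_add_coverage_sdiff_lt {X Y e : Finset V} (he : e ∈ E) (hwe : 0 < w e)
    (heXY : (e ∩ (X ∩ Y)).Nonempty) (hside : e ∩ (X \ Y) = ∅ ∨ e ∩ (Y \ X) = ∅) :
    coverage E w (X \ Y) + coverage E w (Y \ X) < coverage E w X + coverage E w Y := by
  simp only [coverage_eq_sum_hitWeight, ← sum_add_distrib]
  exact sum_lt_sum (fun f _ => hitWeight_sdiff_add_hitWeight_sdiff_le w f X Y)
    ⟨e, he, hitWeight_sdiff_add_hitWeight_sdiff_lt w hwe heXY hside⟩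

end Coverage

theorem tight_uncrossing_general {V : Type*} [DecidableEq V]
    (E : Finset (Finset V)) (w : Finset V → ℕ) (p : Finset V → ℤ)
    (hp : SkewSupermodular p)
    (hcover : ∀ Z : Finset V, p Z ≤ coverage E w Z)
    (X Y : Finset V)
    (hX : coverage E w X = p X) (hY : coverage E w Y = p Y)
    (e : Finset V) (he : e ∈ E) (hwe : 0 < w e)
    (heXY : (e ∩ (X ∩ Y)).Nonempty)
    (hside : e ∩ (X \ Y) = ∅ ∨ e ∩ (Y \ X) = ∅) :
    coverage E w (X ∪ Y) = p (X ∪ Y) ∧ coverage E w (X ∩ Y) = p (X ∩ Y) := by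
  rcases hp X Y with hsuper | hposi
  · have hsub := coverage_inter_add_coverage_union_le E w X Y
    have := hcover (X ∩ Y)
    have := hcover (X ∪ Y)
    constructor <;> linarith
  · have hlt := coverage_sdiff_add_coverage_sdiff_lt E w he hwe heXY hside
    have := hcover (X \ Y)
    have := hcover (Y \ X)
    linarith

/-- Uncrossing lemma for tight sets: if `X`, `Y` are tight, `X ∩ Y ≠ ∅`, and some
positively weighted hyperedge intersects `X ∩ Y` but at most one of `X − Y`, `Y − X`,
then `X ∪ Y` and `X ∩ Y` are tight. -/
theorem tight_uncrossing {V : Type*} [Fintype V] [DecidableEq V]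
    (E : Finset (Finset V)) (w : Finset V → ℕ) (p : Finset V → ℤ)
    (hp : SkewSupermodular p)
    (hcover : ∀ Z : Finset V, p Z ≤ coverage E w Z)
    (X Y : Finset V)
    (hX : coverage E w X = p X) (hY : coverage E w Y = p Y)
    (hXY : (X ∩ Y).Nonempty)
    (e : Finset V) (he : e ∈ E) (hwe : 0 < w e)
    (heXY : (e ∩ (X ∩ Y)).Nonempty)
    (hside : e ∩ (X \ Y) = ∅ ∨ e ∩ (Y \ X) = ∅) :
    coverage E w (X ∪ Y) = p (X ∪ Y) ∧ coverage E w (X ∩ Y) = p (X ∩ Y) :=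
  tight_uncrossing_general E w p hp hcover X Y hX hY e he hwe heXY hside
end

section
/- Let p : 2^V → ℤ be a symmetric skew-supermodular function and Z ⊆ V. Then the contracted function p/Z : 2^{V − Z} → ℤ defined by (p/Z)(X) = max{p(X ∪ R) : R ⊆ Z} is symmetric and skew-supermodular on the ground set V − Z. -/
/-- The contraction `p/Z` of a set function: `(p/Z)(X) = max {p(X ∪ R) : R ⊆ Z}`. -/
def contractFn {V : Type*} [DecidableEq V] (p : Finset V → ℤ) (Z : Finset V)
    (X : Finset V) : ℤ :=
  Z.powerset.sup' ⟨∅, Finset.empty_mem_powerset Z⟩ (fun R => p (X ∪ R))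

namespace Finset

variable {V : Type*} [DecidableEq V]

lemma union_inter_union_of_disjoint {X Y R S : Finset V} (hXS : Disjoint X S)
    (hRY : Disjoint R Y) : (X ∪ R) ∩ (Y ∪ S) = X ∩ Y ∪ R ∩ S := by
  ext a
  have := @disjoint_left.1 hXS a
  have := @disjoint_left.1 hRY a
  simp only [mem_inter, mem_union]
  tauto

lemma union_sdiff_union_of_disjoint {X Y R S : Finset V} (hXS : Disjoint X S)
    (hRY : Disjoint R Y) : (X ∪ R) \ (Y ∪ S) = X \ Y ∪ R \ S := by
  ext a
  have := @disjoint_left.1 hXS a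
  have := @disjoint_left.1 hRY a
  simp only [mem_sdiff, mem_union]
  tauto

lemma compl_union_eq_of_subset [Fintype V] {X Z R : Finset V} (hX : X ⊆ Zᶜ) (hR : R ⊆ Z) :
    (X ∪ R)ᶜ = Zᶜ \ X ∪ Z \ R := by
  ext a
  have hXa : a ∈ X → a ∉ Z := fun h => mem_compl.1 (hX h)
  have := @hR a
  simp only [mem_compl, mem_union, mem_sdiff]
  tauto

end Finset

section Contraction

open Finset

variable {V : Type*} [DecidableEq V] (p : Finset V → ℤ)

lemma le_contractFn {Z R : Finset V} (X : Finset V) (hR : R ⊆ Z) :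
    p (X ∪ R) ≤ contractFn p Z X :=
  le_sup' (fun R => p (X ∪ R)) (mem_powerset.2 hR)

lemma exists_contractFn_eq (Z X : Finset V) : ∃ R ⊆ Z, contractFn p Z X = p (X ∪ R) := by
  obtain ⟨R, hR, h⟩ := exists_mem_eq_sup' ⟨∅, empty_mem_powerset Z⟩ fun R => p (X ∪ R)
  exact ⟨R, mem_powerset.1 hR, h⟩

lemma contractFn_le_contractFn_sdiff [Fintype V] (hsym : ∀ X : Finset V, p X = p Xᶜ)
    {Z X : Finset V} (hX : X ⊆ Zᶜ) : contractFn p Z X ≤ contractFn p Z (Zᶜ \ X) :=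
  sup'_le _ _ fun R hR => by
    rw [hsym, compl_union_eq_of_subset hX (mem_powerset.1 hR)]
    exact le_contractFn p _ sdiff_subset

lemma contractFn_sdiff [Fintype V] (hsym : ∀ X : Finset V, p X = p Xᶜ) {Z X : Finset V}
    (hX : X ⊆ Zᶜ) : contractFn p Z (Zᶜ \ X) = contractFn p Z X := by
  refine le_antisymm ?_ (contractFn_le_contractFn_sdiff p hsym hX)
  simpa only [Finset.sdiff_sdiff_eq_self hX] using
    contractFn_le_contractFn_sdiff p hsym (sdiff_subset : Zᶜ \ X ⊆ Zᶜ)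

lemma contractFn_skew_of_disjoint (hskew : SkewSupermodular p) {Z X Y : Finset V}
    (hX : Disjoint X Z) (hY : Disjoint Y Z) :
    contractFn p Z X + contractFn p Z Y ≤ contractFn p Z (X ∩ Y) + contractFn p Z (X ∪ Y) ∨
      contractFn p Z X + contractFn p Z Y ≤ contractFn p Z (X \ Y) + contractFn p Z (Y \ X) := by
  obtain ⟨R, hR, hXR⟩ := exists_contractFn_eq p Z X
  obtain ⟨S, hS, hYS⟩ := exists_contractFn_eq p Z Y
  have hXS : Disjoint X S := hX.mono_right hS
  have hRY : Disjoint R Y := (hY.mono_right hR).symm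
  rw [hXR, hYS]
  rcases hskew (X ∪ R) (Y ∪ S) with h | h
  · rw [union_inter_union_of_disjoint hXS hRY, union_union_union_comm] at h
    exact Or.inl <| h.trans <| add_le_add (le_contractFn p _ (inter_subset_left.trans hR))
      (le_contractFn p _ (union_subset hR hS))
  · rw [union_sdiff_union_of_disjoint hXS hRY, union_sdiff_union_of_disjoint hRY.symm hXS.symm]
      at h
    exact Or.inr <| h.trans <| add_le_add (le_contractFn p _ (sdiff_subset.trans hR))
      (le_contractFn p _ (sdiff_subset.trans hS))

end Contraction

/-- The contraction of a symmetric skew-supermodular function is symmetric and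
skew-supermodular on the ground set `V − Z`. -/
theorem contract_symmetric_skewSupermodular {V : Type*} [Fintype V] [DecidableEq V]
    (p : Finset V → ℤ) (Z : Finset V)
    (hsym : ∀ X : Finset V, p X = p Xᶜ)
    (hskew : SkewSupermodular p) :
    (∀ X : Finset V, X ⊆ Zᶜ → contractFn p Z X = contractFn p Z (Zᶜ \ X)) ∧
      (∀ X Y : Finset V, X ⊆ Zᶜ → Y ⊆ Zᶜ →
        (contractFn p Z X + contractFn p Z Y ≤
            contractFn p Z (X ∩ Y) + contractFn p Z (X ∪ Y) ∨
          contractFn p Z X + contractFn p Z Y ≤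
            contractFn p Z (X \ Y) + contractFn p Z (Y \ X))) :=
  ⟨fun _ hX => (contractFn_sdiff p hsym hX).symm, fun _ _ hX hY =>
    contractFn_skew_of_disjoint p hskew (le_compl_iff_disjoint_right.1 hX)
      (le_compl_iff_disjoint_right.1 hY)⟩
end

section
/- Let V be a finite set and r : (pairs of distinct elements of V) → ℤ_{≥0} a symmetric function on pairs. Define R : 2^V → ℤ_{≥0} by R(X) = max{r({u,v}) : u ∈ X, v ∈ V \ X} for nonempty proper X ⊊ V, and R(∅) = R(V) = 0. Then R is symmetric and skew-supermodular. -/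
/-!
Let `uv` be a heaviest pair crossing `X`, and assume `R Y ≤ R X`. If `uv` crosses both `X ∩ Y`
and `X ∪ Y`, or both `X \ Y` and `Y \ X`, then `2 r(u, v)` is bounded by the corresponding sum.
Otherwise `u` and `v` lie on the same side of `Y`. Replacing `Y` by `Yᶜ` exchanges the two
skew-supermodular inequalities and does not change `R Y`, so we may take `u ∈ X ∩ Y` and
`v ∈ Y \ X`. Then `uv` crosses `X ∩ Y` and `Y \ X`, and a heaviest pair `ab` crossing `Y`, with
`a ∈ Y`, crosses `X ∪ Y` if `b ∉ X` and `X \ Y` if `b ∈ X`.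
-/

/-- `R(X) = max { r(u,v) : u ∈ X, v ∉ X }`, with `R(∅) = R(V) = 0`
(the `Finset.sup` over an empty index set is `0`). -/
def maxDemand {V : Type*} [Fintype V] [DecidableEq V] (r : V → V → ℕ)
    (X : Finset V) : ℕ :=
  (X ×ˢ Xᶜ).sup fun uv => r uv.1 uv.2

open Finset

section SkewSupermodularAt

variable {V : Type*} [DecidableEq V] {R : Finset V → ℕ} {X Y : Finset V}

def SkewSupermodularAt (R : Finset V → ℕ) (X Y : Finset V) : Prop :=
  R X + R Y ≤ R (X ∩ Y) + R (X ∪ Y) ∨ R X + R Y ≤ R (X \ Y) + R (Y \ X)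

theorem SkewSupermodularAt.symm (h : SkewSupermodularAt R X Y) : SkewSupermodularAt R Y X := by
  unfold SkewSupermodularAt at *
  rwa [add_comm (R Y), inter_comm, union_comm, add_comm (R (Y \ X))]

theorem SkewSupermodularAt.of_compl_right [Fintype V] (hR : ∀ X, R Xᶜ = R X)
    (h : SkewSupermodularAt R X Yᶜ) : SkewSupermodularAt R X Y := by
  have h₁ : X ∪ Yᶜ = (Y \ X)ᶜ := by ext; simp only [mem_union, mem_compl, mem_sdiff]; tauto
  have h₂ : Yᶜ \ X = (X ∪ Y)ᶜ := by ext; simp only [mem_union, mem_compl, mem_sdiff]; tauto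
  unfold SkewSupermodularAt at *
  rwa [hR, ← sdiff_eq_inter_compl, h₁, sdiff_compl, h₂, hR, hR, or_comm] at h

end SkewSupermodularAt

section maxDemand

variable {V : Type*} [Fintype V] [DecidableEq V] {r : V → V → ℕ} {X Y : Finset V} {u v : V}

theorem le_maxDemand_of_mem_of_notMem (hu : u ∈ X) (hv : v ∉ X) : r u v ≤ maxDemand r X :=
  Finset.le_sup (f := fun uv : V × V => r uv.1 uv.2) (b := (u, v))
    (mem_product.2 ⟨hu, mem_compl.2 hv⟩)

theorem le_maxDemand_of_notMem_of_mem (hr : ∀ u v, r u v = r v u) (hu : u ∉ X) (hv : v ∈ X) :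
    r u v ≤ maxDemand r X :=
  (hr u v).trans_le (le_maxDemand_of_mem_of_notMem hv hu)

theorem exists_eq_maxDemand (hX : maxDemand r X ≠ 0) :
    ∃ u ∈ X, ∃ v ∉ X, r u v = maxDemand r X := by
  have hne : (X ×ˢ Xᶜ).Nonempty := by
    by_contra h
    exact hX (by rw [maxDemand, not_nonempty_iff_eq_empty.1 h, sup_empty]; rfl)
  obtain ⟨⟨u, v⟩, huv, heq⟩ := exists_mem_eq_sup _ hne fun uv : V × V => r uv.1 uv.2
  obtain ⟨hu, hv⟩ := mem_product.1 huv
  exact ⟨u, hu, v, mem_compl.1 hv, heq.symm⟩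

theorem maxDemand_compl_le (hr : ∀ u v, r u v = r v u) : maxDemand r Xᶜ ≤ maxDemand r X :=
  Finset.sup_le fun uv huv => by
    obtain ⟨hu, hv⟩ := mem_product.1 huv
    exact le_maxDemand_of_notMem_of_mem hr (mem_compl.1 hu) (by simpa using hv)

theorem maxDemand_compl (hr : ∀ u v, r u v = r v u) (X : Finset V) :
    maxDemand r Xᶜ = maxDemand r X :=
  le_antisymm (maxDemand_compl_le hr) (by simpa using maxDemand_compl_le hr (X := Xᶜ))

theorem skewSupermodularAt_maxDemand_of_mem_inter_of_mem_sdiff (hr : ∀ u v, r u v = r v u)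
    (hu : u ∈ X ∩ Y) (hv : v ∈ Y \ X) (hX : maxDemand r X ≤ r u v) :
    SkewSupermodularAt (maxDemand r) X Y := by
  have hX_inter : maxDemand r X ≤ maxDemand r (X ∩ Y) :=
    hX.trans (le_maxDemand_of_mem_of_notMem hu (by simp_all))
  obtain hY | hY := eq_or_ne (maxDemand r Y) 0
  · exact Or.inl (by omega)
  obtain ⟨a, ha, b, hb, hab⟩ := exists_eq_maxDemand hY
  by_cases hbX : b ∈ X
  · refine Or.inr ((add_le_add ?_ ?_).trans_eq (add_comm _ _))
    · exact hX.trans (le_maxDemand_of_notMem_of_mem hr (by simp_all) hv)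
    · exact hab ▸ le_maxDemand_of_notMem_of_mem hr (by simp [ha]) (by simp [hb, hbX])
  · refine Or.inl (add_le_add hX_inter ?_)
    exact hab ▸ le_maxDemand_of_mem_of_notMem (by simp [ha]) (by simp [hb, hbX])

theorem skewSupermodularAt_maxDemand (hr : ∀ u v, r u v = r v u) (X Y : Finset V) :
    SkewSupermodularAt (maxDemand r) X Y := by
  wlog hYX : maxDemand r Y ≤ maxDemand r X generalizing X Y
  · exact (this Y X (le_of_not_ge hYX)).symm
  obtain hX | hX := eq_or_ne (maxDemand r X) 0
  · exact Or.inl (by omega)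
  obtain ⟨u, hu, v, hv, huv⟩ := exists_eq_maxDemand hX
  rw [← huv] at hYX
  by_cases huY : u ∈ Y <;> by_cases hvY : v ∈ Y
  · exact skewSupermodularAt_maxDemand_of_mem_inter_of_mem_sdiff hr (by simp [*]) (by simp [*])
      huv.ge
  · refine Or.inl (add_le_add (huv ▸ ?_) (hYX.trans ?_))
    · exact le_maxDemand_of_mem_of_notMem (by simp [*]) (by simp [*])
    · exact le_maxDemand_of_mem_of_notMem (by simp [*]) (by simp [*])
  · refine Or.inr (add_le_add (huv ▸ ?_) (hYX.trans ?_))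
    · exact le_maxDemand_of_mem_of_notMem (by simp [*]) (by simp [*])
    · exact le_maxDemand_of_notMem_of_mem hr (by simp [*]) (by simp [*])
  · exact (skewSupermodularAt_maxDemand_of_mem_inter_of_mem_sdiff hr (Y := Yᶜ) (by simp [*])
      (by simp [*]) huv.ge).of_compl_right (maxDemand_compl hr)

end maxDemand

/-- For a symmetric demand function `r` on pairs, the function `R` is symmetric and
skew-supermodular. -/
theorem maxDemand_symmetric_skewSupermodular {V : Type*} [Fintype V] [DecidableEq V]
    (r : V → V → ℕ) (hr : ∀ u v : V, r u v = r v u) :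
    (∀ X : Finset V, maxDemand r X = maxDemand r Xᶜ) ∧
      (∀ X Y : Finset V,
        maxDemand r X + maxDemand r Y ≤ maxDemand r (X ∩ Y) + maxDemand r (X ∪ Y) ∨
        maxDemand r X + maxDemand r Y ≤ maxDemand r (X \ Y) + maxDemand r (Y \ X)) :=
  ⟨fun X => (maxDemand_compl hr X).symm, skewSupermodularAt_maxDemand hr⟩
end

section
/- Let G = (V, E) be a k-hyperedge-connected hypergraph and let G' be obtained from G by a (k, p)-pinching operation (for any p ≤ k, choice of hyperedges e_1,…,e_p, positive integers t_1,…,t_p summing to k, and partitions of each e_i into t_i nonempty parts). Then G' is a k-hyperedge-connected hypergraph on vertex set V ∪ {s}, where s is the newly added vertex. -/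
lemma hcut_compl {V ι : Type*} [Fintype V] [DecidableEq V] (E : Finset ι) (edge : ι → Finset V)
    (X : Finset V) : hcut E edge Xᶜ = hcut E edge X := by
  unfold hcut
  congr 1
  apply Finset.filter_congr
  intro i _
  have h1 : edge i ∩ Xᶜ = edge i \ X := by ext v; simp
  have h2 : edge i \ Xᶜ = edge i ∩ X := by ext v; simp
  rw [h1, h2, and_comm]

/-- A `(k,p)`-pinching of a `k`-hyperedge-connected hypergraph is
`k`-hyperedge-connected on the vertex set `V ∪ {s}` (here `s = none` in `Option V`).
The pinching removes the `p` distinct hyperedges `edge (sel 1), …, edge (sel p)`,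
partitions each `edge (sel i)` into `t i` nonempty parts `f i j`, with `Σ t i = k`,
and adds the `k` hyperedges `f i j ∪ {s}`. -/
theorem pinching_preserves_kEC {V ι : Type*} [Fintype V] [DecidableEq V] [DecidableEq ι]
    (E : Finset ι) (edge : ι → Finset V) (k p : ℕ) (hp0 : 0 < p) (hpk : p ≤ k)
    (hconn : ∀ X : Finset V, X.Nonempty → X ≠ Finset.univ → k ≤ hcut E edge X)
    (sel : Fin p → ι) (hsel : Function.Injective sel) (hselE : ∀ i, sel i ∈ E)
    (t : Fin p → ℕ) (ht0 : ∀ i, 0 < t i) (htk : ∑ i, t i = k)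
    (f : (i : Fin p) → Fin (t i) → Finset V)
    (hfne : ∀ i j, (f i j).Nonempty)
    (hfdisj : ∀ i, ∀ j j' : Fin (t i), j ≠ j' → f i j ∩ f i j' = ∅)
    (hfuni : ∀ i, Finset.univ.sup (f i) = edge (sel i)) :
    ∀ X : Finset (Option V), X.Nonempty → X ≠ Finset.univ →
      k ≤ hcut
        (((E.filter (fun i => i ∉ Finset.univ.image sel)).image Sum.inl) ∪
          ((Finset.univ : Finset (Σ i : Fin p, Fin (t i))).image Sum.inr))
        (Sum.elim (fun i => (edge i).image some)
          (fun q => insert none ((f q.1 q.2).image some)))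
        X := by
  set E₁ : Finset ι := E.filter (fun i => i ∉ Finset.univ.image sel) with hE₁
  set edge' : ι ⊕ (Σ i : Fin p, Fin (t i)) → Finset (Option V) :=
    Sum.elim (fun i => (edge i).image some)
      (fun q => insert none ((f q.1 q.2).image some)) with hedge'
  set E' : Finset (ι ⊕ (Σ i : Fin p, Fin (t i))) :=
    E₁.image Sum.inl ∪ (Finset.univ : Finset (Σ i : Fin p, Fin (t i))).image Sum.inr with hE'
  -- main lemma: for X not containing `none` and nonempty
  have main : ∀ X : Finset (Option V), none ∉ X → X.Nonempty → k ≤ hcut E' edge' X := by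
    intro X hnone hXne
    set Y : Finset V := Finset.univ.filter (fun v => some v ∈ X) with hYdef
    have hY : ∀ v, v ∈ Y ↔ some v ∈ X := by
      intro v; simp [hYdef]
    have hYne : Y.Nonempty := by
      obtain ⟨x, hx⟩ := hXne
      match x with
      | none => exact absurd hx hnone
      | some v => exact ⟨v, (hY v).2 hx⟩
    -- translation lemmas
    have hint : ∀ e : Finset V, ((e.image some ∩ X).Nonempty ↔ (e ∩ Y).Nonempty) := by
      intro e
      constructor
      · rintro ⟨x, hx⟩
        rw [Finset.mem_inter] at hx
        obtain ⟨v, hv, rfl⟩ := Finset.mem_image.1 hx.1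
        exact ⟨v, Finset.mem_inter.2 ⟨hv, (hY v).2 hx.2⟩⟩
      · rintro ⟨v, hv⟩
        rw [Finset.mem_inter] at hv
        exact ⟨some v, Finset.mem_inter.2 ⟨Finset.mem_image_of_mem _ hv.1, (hY v).1 hv.2⟩⟩
    have hdiff : ∀ e : Finset V, ((e.image some \ X).Nonempty ↔ (e \ Y).Nonempty) := by
      intro e
      constructor
      · rintro ⟨x, hx⟩
        rw [Finset.mem_sdiff] at hx
        obtain ⟨v, hv, rfl⟩ := Finset.mem_image.1 hx.1
        exact ⟨v, Finset.mem_sdiff.2 ⟨hv, fun h => hx.2 ((hY v).1 h)⟩⟩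
      · rintro ⟨v, hv⟩
        rw [Finset.mem_sdiff] at hv
        exact ⟨some v, Finset.mem_sdiff.2 ⟨Finset.mem_image_of_mem _ hv.1,
          fun h => hv.2 ((hY v).2 h)⟩⟩
    -- the cut of the new graph splits
    have hQ2 : ∀ q : Σ i : Fin p, Fin (t i),
        ((edge' (Sum.inr q) ∩ X).Nonempty ∧ (edge' (Sum.inr q) \ X).Nonempty)
          ↔ (f q.1 q.2 ∩ Y).Nonempty := by
      intro q
      have hd : (edge' (Sum.inr q) \ X).Nonempty := by
        refine ⟨none, Finset.mem_sdiff.2 ⟨?_, hnone⟩⟩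
        simp [hedge']
      constructor
      · rintro ⟨h1, -⟩
        obtain ⟨x, hx⟩ := h1
        rw [Finset.mem_inter] at hx
        have hx1 := hx.1
        simp only [hedge', Sum.elim_inr, Finset.mem_insert] at hx1
        rcases hx1 with rfl | hx1
        · exact absurd hx.2 hnone
        · obtain ⟨v, hv, rfl⟩ := Finset.mem_image.1 hx1
          exact ⟨v, Finset.mem_inter.2 ⟨hv, (hY v).2 hx.2⟩⟩
      · rintro ⟨v, hv⟩
        rw [Finset.mem_inter] at hv
        refine ⟨⟨some v, Finset.mem_inter.2 ⟨?_, (hY v).1 hv.2⟩⟩, hd⟩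
        simp only [hedge', Sum.elim_inr, Finset.mem_insert]
        exact Or.inr (Finset.mem_image_of_mem _ hv.1)
    have hsplit : hcut E' edge' X =
        (E₁.filter (fun i => (edge i ∩ Y).Nonempty ∧ (edge i \ Y).Nonempty)).card
        + ((Finset.univ : Finset (Σ i : Fin p, Fin (t i))).filter
            (fun q => (f q.1 q.2 ∩ Y).Nonempty)).card := by
      unfold hcut
      rw [hE', Finset.filter_union, Finset.card_union_of_disjoint]
      · congr 1
        · rw [Finset.filter_image, Finset.card_image_of_injective _ Sum.inl_injective]
          congr 1
          apply Finset.filter_congr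
          intro i _
          simp only [hedge', Sum.elim_inl]
          rw [hint, hdiff]
        · rw [Finset.filter_image, Finset.card_image_of_injective _ Sum.inr_injective]
          congr 1
          apply Finset.filter_congr
          intro q _
          rw [hQ2 q]
      · rw [Finset.disjoint_left]
        intro a ha hb
        obtain ⟨i, -, rfl⟩ := Finset.mem_image.1 (Finset.mem_of_mem_filter _ ha)
        obtain ⟨q, -, h⟩ := Finset.mem_image.1 (Finset.mem_of_mem_filter _ hb)
        cases h
    rw [hsplit]
    by_cases hYu : Y = Finset.univ
    · -- all k new edges cross
      have : ((Finset.univ : Finset (Σ i : Fin p, Fin (t i))).filter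
          (fun q => (f q.1 q.2 ∩ Y).Nonempty)).card = k := by
        rw [Finset.filter_true_of_mem, Finset.card_univ, Fintype.card_sigma]
        · simpa using htk
        · intro q _
          rw [hYu, Finset.inter_univ]
          exact hfne q.1 q.2
      omega
    · -- use connectivity of the old graph
      have hk := hconn Y hYne hYu
      set P : ι → Prop := fun i => (edge i ∩ Y).Nonempty ∧ (edge i \ Y).Nonempty with hP
      have hEsel : (Finset.univ.image sel : Finset ι) ⊆ E := by
        intro a ha
        obtain ⟨i, -, rfl⟩ := Finset.mem_image.1 ha
        exact hselE i
      have hcutsplit : hcut E edge Y =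
          (E₁.filter P).card + ((Finset.univ.image sel).filter P).card := by
        have h0 : hcut E edge Y = (E.filter P).card := rfl
        have key : ((E.filter P).filter (fun i => i ∈ Finset.univ.image sel)).card
            + ((E.filter P).filter (fun i => i ∉ Finset.univ.image sel)).card
            = (E.filter P).card :=
          by rw [Finset.card_filter_add_card_filter_not]
        have e1 : (E.filter P).filter (fun i => i ∉ Finset.univ.image sel)
            = E₁.filter P := by
          rw [hE₁, Finset.filter_filter, Finset.filter_filter]
          apply Finset.filter_congr
          intro i _
          tauto
        have e2 : (E.filter P).filter (fun i => i ∈ Finset.univ.image sel)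
            = (Finset.univ.image sel).filter P := by
          ext a
          simp only [Finset.mem_filter]
          constructor
          · rintro ⟨⟨hE, hPa⟩, hm⟩
            exact ⟨hm, hPa⟩
          · rintro ⟨hm, hPa⟩
            exact ⟨⟨hEsel hm, hPa⟩, hm⟩
        rw [h0, ← key, e1, e2, Nat.add_comm]
      -- bound the selected part
      have hbound : ((Finset.univ.image sel).filter P).card ≤
          ((Finset.univ : Finset (Σ i : Fin p, Fin (t i))).filter
            (fun q => (f q.1 q.2 ∩ Y).Nonempty)).card := by
        rw [Finset.filter_image, Finset.card_image_of_injective _ hsel]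
        have hex : ∀ a : Fin p, P (sel a) → ∃ j, (f a j ∩ Y).Nonempty := by
          intro a ha
          obtain ⟨v, hv⟩ := ha.1
          rw [Finset.mem_inter, ← hfuni a, Finset.mem_sup] at hv
          obtain ⟨⟨j, -, hj⟩, hv2⟩ := hv
          exact ⟨j, ⟨v, Finset.mem_inter.2 ⟨hj, hv2⟩⟩⟩
        have hex' : ∀ a : Fin p, ∃ j : Fin (t a), P (sel a) → (f a j ∩ Y).Nonempty := by
          intro a
          by_cases h : P (sel a)
          · obtain ⟨j, hj⟩ := hex a h
            exact ⟨j, fun _ => hj⟩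
          · exact ⟨⟨0, ht0 a⟩, fun h' => absurd h' h⟩
        choose j hj using hex'
        apply Finset.card_le_card_of_injOn (fun a => (⟨a, j a⟩ : Σ i : Fin p, Fin (t i)))
        · intro a ha
          rw [Finset.mem_coe, Finset.mem_filter] at ha
          rw [Finset.mem_coe, Finset.mem_filter]
          exact ⟨Finset.mem_univ _, hj a ha.2⟩
        · intro a _ a' _ hgg
          exact (Sigma.mk.inj_iff.1 hgg).1
      calc k ≤ hcut E edge Y := hk
        _ = (E₁.filter P).card + ((Finset.univ.image sel).filter P).card := hcutsplit
        _ ≤ _ := by exact Nat.add_le_add le_rfl hbound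
  intro X hXne hXu
  by_cases h : none ∈ X
  · rw [← hcut_compl]
    apply main
    · simp [h]
    · rcases Finset.eq_empty_or_nonempty Xᶜ with hc | hc
      · exfalso
        apply hXu
        have := congrArg compl hc
        simpa using this
      · exact hc
  · exact main X h hXne
end

section
/- There exists a symmetric skew-supermodular function p : 2^V → ℤ ∪ {−∞} and a weighted hypergraph (H = (V, E), w) with b_{(H,w)}(X) ≥ p(X) for all X ⊆ V such that every hypergraph (H* = (V, E*), w*) obtained by merging hyperedges of (H, w) and satisfying d_{(H*,w*)}(X) ≥ p(X) for all X ⊆ V has |E* \ E| = Ω(|V|²). Concretely: fix u ∈ V with |V| = n ≥ 3, let p({u}) = p(V − u) = C(n−1, 2) and p(X) = −∞ otherwise; let E consist of all pairs {a,b} ⊆ V − u with weight 1 and the singleton {u} with weight C(n−1,2). Then the unique strong cover obtainable by merging is the hypergraph with hyperedges {u, a, b} for all pairs {a,b} ⊆ V − u, each of weight 1, so the number of new hyperedges is C(n−1,2). -/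
/-- One merging step on the multi-hypergraph: replace two disjoint hyperedges by
their union. -/
def MergeStep {V : Type*} [DecidableEq V] (A B : Multiset (Finset V)) : Prop :=
  ∃ e f C, e ∩ f = ∅ ∧ A = e ::ₘ f ::ₘ C ∧ B = (e ∪ f) ::ₘ C

/-- Obtained by repeatedly merging disjoint hyperedges. -/
def Merged {V : Type*} [DecidableEq V] : Multiset (Finset V) → Multiset (Finset V) → Prop :=
  Relation.ReflTransGen MergeStep

/-- Unweighted multi-hypergraph expansion of a weighted hypergraph. -/
def expand {V : Type*} [DecidableEq V] (E : Finset (Finset V)) (w : Finset V → ℕ) :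
    Multiset (Finset V) :=
  ∑ e ∈ E, Multiset.replicate (w e) e

/-- Coverage of a multi-hypergraph (counting multiplicity). -/
def mcov {V : Type*} [DecidableEq V] (M : Multiset (Finset V)) (X : Finset V) : ℕ :=
  (M.filter fun e => (e ∩ X).Nonempty).card

/-- Cut value of a multi-hypergraph (counting multiplicity). -/
def mcut {V : Type*} [DecidableEq V] (M : Multiset (Finset V)) (X : Finset V) : ℕ :=
  (M.filter fun e => (e ∩ X).Nonempty ∧ (e \ X).Nonempty).card

/-! Merging disjoint hyperedges preserves `∑ₑ |e \ {u}|`, which starts at `2·C(n−1, 2)`, and the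
parity of each `|e \ {u}|`, and every original hyperedge stays inside a merged one. A strong cover
has `C(n−1, 2)` hyperedges crossing `{u}`, each with at least two vertices besides `u`; this
exhausts the sum, so every hyperedge meeting `V − u` is a triple `{u, a, b}`. As every pair
`{a, b}` lies in some merged hyperedge, all `C(n−1, 2)` triples occur, and none was in `E`. -/

open Finset

section Merging

variable {V : Type*} [DecidableEq V] {A B : Multiset (Finset V)}

theorem Merged.forall_mem {P : Finset V → Prop} (hAB : Merged A B) (hA : ∀ e ∈ A, P e)
    (hP : ∀ e f, Disjoint e f → P e → P f → P (e ∪ f)) : ∀ e ∈ B, P e := by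
  induction hAB with
  | refl => exact hA
  | tail _ hstep ih =>
    obtain ⟨e, f, C, hef, rfl, rfl⟩ := hstep
    simp only [Multiset.forall_mem_cons] at ih ⊢
    exact ⟨hP e f (disjoint_iff_inter_eq_empty.mpr hef) ih.1 ih.2.1, ih.2.2⟩

theorem Merged.exists_superset (hAB : Merged A B) : ∀ e ∈ A, ∃ f ∈ B, e ⊆ f := by
  induction hAB with
  | refl => exact fun e he => ⟨e, he, subset_rfl⟩
  | tail _ hstep ih =>
    obtain ⟨e, f, C, -, rfl, rfl⟩ := hstep
    intro g hg
    obtain ⟨h, hh, hgh⟩ := ih g hg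
    simp only [Multiset.mem_cons] at hh
    rcases hh with rfl | rfl | hh
    · exact ⟨h ∪ f, Multiset.mem_cons_self _ _, hgh.trans subset_union_left⟩
    · exact ⟨e ∪ h, Multiset.mem_cons_self _ _, hgh.trans subset_union_right⟩
    · exact ⟨h, Multiset.mem_cons_of_mem hh, hgh⟩

theorem Merged.sum_map_eq {M : Type*} [AddCommMonoid M] {φ : Finset V → M}
    (hφ : ∀ e f, Disjoint e f → φ (e ∪ f) = φ e + φ f) (hAB : Merged A B) :
    (B.map φ).sum = (A.map φ).sum := by
  induction hAB with
  | refl => rfl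
  | tail _ hstep ih =>
    obtain ⟨e, f, C, hef, rfl, rfl⟩ := hstep
    rw [← ih]
    simp only [Multiset.map_cons, Multiset.sum_cons, hφ e f (disjoint_iff_inter_eq_empty.mpr hef),
      add_assoc]

end Merging

theorem Multiset.sum_map_ite_const_zero {α : Type*} (p : α → Prop) [DecidablePred p]
    (M : Multiset α) (k : ℕ) :
    (M.map fun a => if p a then k else 0).sum = k * (M.filter p).card := by
  induction M using Multiset.induction_on with
  | empty => simp
  | cons a s ih => by_cases h : p a <;> simp [h, ih, mul_add, add_comm]

/-- Each hyperedge crossing `X` has `|e \ X| ≥ 2` by parity, so `2 * mcut M X ≤ ∑ₑ |e \ X|`;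
when the sum is at most `2 * mcut M X` this is tight hyperedge by hyperedge. -/
theorem inter_nonempty_and_card_sdiff_eq_two_of_sum_le {V : Type*} [DecidableEq V]
    {M : Multiset (Finset V)} {X : Finset V} {N : ℕ} (heven : ∀ e ∈ M, Even #(e \ X))
    (hsum : (M.map fun e => #(e \ X)).sum ≤ 2 * N) (hcut : N ≤ mcut M X) {e : Finset V}
    (he : e ∈ M) (hne : (e \ X).Nonempty) : (e ∩ X).Nonempty ∧ #(e \ X) = 2 := by
  set c : Finset V → ℕ := fun e => if (e ∩ X).Nonempty ∧ (e \ X).Nonempty then 2 else 0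
  have hc : ∀ e ∈ M, c e ≤ #(e \ X) := by
    intro e he
    simp only [c]
    split_ifs with h
    · obtain ⟨k, hk⟩ := heven e he
      have := h.2.card_pos
      omega
    · exact Nat.zero_le _
  have hcsum : (M.map c).sum = 2 * mcut M X := Multiset.sum_map_ite_const_zero _ _ 2
  have hsplit : (M.map fun e => #(e \ X)).sum =
      (M.map c).sum + (M.map fun e => #(e \ X) - c e).sum := by
    rw [← Multiset.sum_map_add]
    exact congrArg _ (Multiset.map_congr rfl fun e he => (Nat.add_sub_cancel' (hc e he)).symm)
  have hle : #(e \ X) ≤ c e := Nat.sub_eq_zero_iff_le.mp <| Multiset.sum_eq_zero_iff.mp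
    (by omega : (M.map fun e => #(e \ X) - c e).sum = 0) _ (Multiset.mem_map_of_mem _ he)
  by_cases h : (e ∩ X).Nonempty ∧ (e \ X).Nonempty
  · have hge := hc e he
    simp only [c, if_pos h] at hle hge
    exact ⟨h.1, le_antisymm hle hge⟩
  · have := hne.card_pos
    simp only [c, if_neg h] at hle
    omega

section PairDemand

variable {V : Type*} [Fintype V] [DecidableEq V]

def pairDemand (S : Finset V) (c : ℤ) (X : Finset V) : WithBot ℤ :=
  if X = S ∨ X = Sᶜ then (c : WithBot ℤ) else ⊥

theorem pairDemand_compl (S : Finset V) (c : ℤ) (X : Finset V) :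
    pairDemand S c X = pairDemand S c Xᶜ := by
  have : (Xᶜ = S ∨ Xᶜ = Sᶜ) ↔ (X = S ∨ X = Sᶜ) := by
    rw [compl_inj_iff, compl_eq_comm, @eq_comm _ Sᶜ, or_comm]
  simp only [pairDemand, this]

theorem pairDemand_skewSupermodular (S : Finset V) (c : ℤ) (X Y : Finset V) :
    pairDemand S c X + pairDemand S c Y ≤ pairDemand S c (X ∩ Y) + pairDemand S c (X ∪ Y) ∨
      pairDemand S c X + pairDemand S c Y ≤
        pairDemand S c (X \ Y) + pairDemand S c (Y \ X) := by
  by_cases hX : X = S ∨ X = Sᶜ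
  swap
  · simp [pairDemand, hX]
  by_cases hY : Y = S ∨ Y = Sᶜ
  swap
  · simp [pairDemand, hY]
  by_cases hXY : X = Y
  · subst hXY
    simp
  · right
    have : Y = Xᶜ := by rcases hX with rfl | rfl <;> rcases hY with rfl | rfl <;> simp_all
    subst this
    rw [sdiff_compl, inf_idem, sdiff_eq_left.mpr disjoint_compl_left]

end PairDemand

theorem card_le_mcov {V : Type*} [DecidableEq V] {A M : Multiset (Finset V)} {X : Finset V}
    (hAM : A ≤ M) (hA : ∀ e ∈ A, (e ∩ X).Nonempty) : Multiset.card A ≤ mcov M X := by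
  calc Multiset.card A = Multiset.card (A.filter fun e => (e ∩ X).Nonempty) := by
        rw [Multiset.filter_eq_self.mpr hA]
    _ ≤ mcov M X := Multiset.card_le_card (Multiset.filter_le_filter _ hAM)

theorem card_union_sdiff_of_disjoint {V : Type*} [DecidableEq V] {e f : Finset V}
    (X : Finset V) (hef : Disjoint e f) : #((e ∪ f) \ X) = #(e \ X) + #(f \ X) := by
  rw [union_sdiff_distrib, card_union_of_disjoint (hef.mono sdiff_subset sdiff_subset)]

section Star

variable {V : Type*} [Fintype V] [DecidableEq V] (u : V)

def pairsAvoiding : Finset (Finset V) := powersetCard 2 {u}ᶜ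

def starEdges : Finset (Finset V) := insert {u} (pairsAvoiding u)

def starWeight (e : Finset V) : ℕ := if e = {u} then #(pairsAvoiding u) else 1

theorem card_pairsAvoiding : #(pairsAvoiding u) = (Fintype.card V - 1).choose 2 := by
  rw [pairsAvoiding, card_powersetCard, card_compl, card_singleton]

variable {u} in
theorem notMem_of_mem_pairsAvoiding {s : Finset V} (hs : s ∈ pairsAvoiding u) : u ∉ s :=
  fun hu => by simpa using (mem_powersetCard.mp hs).1 hu

variable {u} in
theorem card_of_mem_pairsAvoiding {s : Finset V} (hs : s ∈ pairsAvoiding u) : #s = 2 :=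
  (mem_powersetCard.mp hs).2

theorem singleton_notMem_pairsAvoiding : {u} ∉ pairsAvoiding u :=
  fun h => by simpa using card_of_mem_pairsAvoiding h

theorem starWeight_pos (hV : 3 ≤ Fintype.card V) (e : Finset V) : 0 < starWeight u e := by
  unfold starWeight
  split_ifs
  · rw [card_pairsAvoiding]
    exact Nat.choose_pos (by omega)
  · exact Nat.one_pos

theorem expand_starEdges : expand (starEdges u) (starWeight u) =
    Multiset.replicate #(pairsAvoiding u) {u} + (pairsAvoiding u).val := by
  rw [expand, starEdges, sum_insert (singleton_notMem_pairsAvoiding u), starWeight, if_pos rfl,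
    ← sum_multiset_singleton (pairsAvoiding u)]
  congr 1
  refine sum_congr rfl fun e he => ?_
  rw [starWeight, if_neg (ne_of_mem_of_not_mem he (singleton_notMem_pairsAvoiding u)),
    Multiset.replicate_one]

theorem pairDemand_le_mcov_expand_starEdges (X : Finset V) :
    pairDemand {u} #(pairsAvoiding u) X ≤ ((mcov (expand (starEdges u) (starWeight u)) X : ℤ) :
      WithBot ℤ) := by
  unfold pairDemand
  split_ifs with hX
  swap
  · exact bot_le
  rw [expand_starEdges]
  norm_cast
  rcases hX with rfl | rfl
  · simpa using card_le_mcov (X := {u}) (Multiset.le_add_right (Multiset.replicate _ {u}) _)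
      fun e he => by simp [Multiset.eq_of_mem_replicate he]
  · refine card_le_mcov (Multiset.le_add_left _ _) fun s hs => ?_
    rw [inter_eq_left.mpr fun a ha => mem_compl.mpr fun hau =>
      notMem_of_mem_pairsAvoiding hs (mem_singleton.mp hau ▸ ha :)]
    exact card_pos.mp (by rw [card_of_mem_pairsAvoiding hs]; norm_num)

end Star

section StarMerged

variable {V : Type*} [Fintype V] [DecidableEq V] {u : V} {M : Multiset (Finset V)}

theorem sdiff_singleton_of_mem_pairsAvoiding {s : Finset V} (hs : s ∈ pairsAvoiding u) :
    s \ {u} = s := by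
  rw [sdiff_singleton_eq_erase, erase_eq_of_notMem (notMem_of_mem_pairsAvoiding hs)]

theorem Merged.even_card_sdiff_of_expand_starEdges
    (hM : Merged (expand (starEdges u) (starWeight u)) M) : ∀ e ∈ M, Even #(e \ {u}) := by
  refine hM.forall_mem (fun e he => ?_) fun e f hef he hf => ?_
  · rw [expand_starEdges, Multiset.mem_add] at he
    rcases he with he | he
    · simp [Multiset.eq_of_mem_replicate he]
    · rw [sdiff_singleton_of_mem_pairsAvoiding he, card_of_mem_pairsAvoiding he]
      exact even_two
  · rw [card_union_sdiff_of_disjoint _ hef]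
    exact he.add hf

theorem Merged.sum_card_sdiff_of_expand_starEdges
    (hM : Merged (expand (starEdges u) (starWeight u)) M) :
    (M.map fun e => #(e \ {u})).sum = 2 * #(pairsAvoiding u) := by
  rw [hM.sum_map_eq fun e f => card_union_sdiff_of_disjoint _, expand_starEdges,
    Multiset.map_add, Multiset.sum_add, Multiset.map_replicate, sdiff_self, bot_eq_empty,
    card_empty, Multiset.sum_replicate, smul_zero, zero_add, ← sum_eq_multiset_sum, mul_comm,
    ← smul_eq_mul, ← sum_const]
  exact sum_congr rfl fun s hs => by
    rw [sdiff_singleton_of_mem_pairsAvoiding hs, card_of_mem_pairsAvoiding hs]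

theorem Merged.insert_mem_of_expand_starEdges
    (hM : Merged (expand (starEdges u) (starWeight u)) M)
    (hcut : #(pairsAvoiding u) ≤ mcut M {u}) {s : Finset V} (hs : s ∈ pairsAvoiding u) :
    insert u s ∈ M := by
  obtain ⟨f, hfM, hsf⟩ := hM.exists_superset s
    (by rw [expand_starEdges]; exact Multiset.mem_add.mpr (Or.inr hs))
  have hsf' : s ⊆ f \ {u} := by
    rw [← sdiff_singleton_of_mem_pairsAvoiding hs]
    exact sdiff_subset_sdiff hsf subset_rfl
  have hne : (f \ {u}).Nonempty :=
    card_pos.mp <| two_pos.trans_le <| (card_of_mem_pairsAvoiding hs).symm.trans_le <|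
      card_le_card hsf'
  obtain ⟨⟨v, hv⟩, hcard⟩ := inter_nonempty_and_card_sdiff_eq_two_of_sum_le
    hM.even_card_sdiff_of_expand_starEdges hM.sum_card_sdiff_of_expand_starEdges.le hcut hfM hne
  have hu : u ∈ f := by
    obtain ⟨hvf, hvu⟩ := mem_inter.mp hv
    rwa [mem_singleton.mp hvu] at hvf
  have hs_eq : s = f \ {u} :=
    eq_of_subset_of_card_le hsf' (by rw [hcard, card_of_mem_pairsAvoiding hs])
  rwa [hs_eq, sdiff_singleton_eq_erase, insert_erase hu]

theorem Merged.card_pairsAvoiding_le_card_sdiff_starEdges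
    (hM : Merged (expand (starEdges u) (starWeight u)) M)
    (hcut : #(pairsAvoiding u) ≤ mcut M {u}) :
    #(pairsAvoiding u) ≤ #(M.toFinset \ starEdges u) := by
  have hinj : Set.InjOn (insert u) (pairsAvoiding u : Set (Finset V)) := fun s hs t ht hst => by
    rw [← erase_insert (notMem_of_mem_pairsAvoiding hs),
      ← erase_insert (notMem_of_mem_pairsAvoiding ht), hst]
  rw [← card_image_of_injOn hinj]
  refine card_le_card fun e he => ?_
  obtain ⟨s, hs, rfl⟩ := mem_image.mp he
  have hcard : #(insert u s) = 3 := by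
    rw [card_insert_of_notMem (notMem_of_mem_pairsAvoiding hs), card_of_mem_pairsAvoiding hs]
  refine mem_sdiff.mpr ⟨Multiset.mem_toFinset.mpr (hM.insert_mem_of_expand_starEdges hcut hs),
    fun hmem => ?_⟩
  rcases mem_insert.mp hmem with h | h
  · rw [h, card_singleton] at hcard
    omega
  · rw [card_of_mem_pairsAvoiding h] at hcard
    omega

end StarMerged

/-- There is a symmetric skew-supermodular function `p : 2^V → ℤ ∪ {−∞}` and a weighted
hypergraph weakly covering `p` such that every hypergraph obtained from it by merging
hyperedges that strongly covers `p` has at least `C(n−1, 2) = Ω(|V|²)` new hyperedges. -/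
theorem weak_to_strong_cover_quadratic_lower_bound :
    ∀ n : ℕ, 3 ≤ n →
      ∃ (p : Finset (Fin n) → WithBot ℤ) (E : Finset (Finset (Fin n)))
        (w : Finset (Fin n) → ℕ),
        (∀ X : Finset (Fin n), p X = p Xᶜ) ∧
        (∀ X Y : Finset (Fin n),
          p X + p Y ≤ p (X ∩ Y) + p (X ∪ Y) ∨ p X + p Y ≤ p (X \ Y) + p (Y \ X)) ∧
        (∀ e ∈ E, 0 < w e) ∧
        (∀ X : Finset (Fin n), p X ≤ ((mcov (expand E w) X : ℤ) : WithBot ℤ)) ∧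
        (∀ M : Multiset (Finset (Fin n)), Merged (expand E w) M →
          (∀ X : Finset (Fin n), p X ≤ ((mcut M X : ℤ) : WithBot ℤ)) →
          (n - 1).choose 2 ≤ (M.toFinset \ E).card) := by
  intro n hn
  set u : Fin n := ⟨0, by omega⟩
  have hN : #(pairsAvoiding u) = (n - 1).choose 2 := by
    rw [card_pairsAvoiding, Fintype.card_fin]
  refine ⟨pairDemand {u} #(pairsAvoiding u), starEdges u, starWeight u,
    pairDemand_compl _ _, pairDemand_skewSupermodular _ _,
    fun e _ => starWeight_pos u (by rwa [Fintype.card_fin]) e,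
    pairDemand_le_mcov_expand_starEdges u, fun M hM hcover => ?_⟩
  have hcut : #(pairsAvoiding u) ≤ mcut M {u} := by
    simpa [pairDemand] using hcover {u}
  exact hN ▸ hM.card_pairsAvoiding_le_card_sdiff_starEdges hcut
end

section
/- Let G = (V, E) be a hypergraph, T ⊆ V a set of terminals, r ∈ T, and s ∈ V − T. Let H be a hypergraph obtained from G by a single h-trim operation at s on a hyperedge e ∈ E with s ∈ e and |e| ≥ 2 (i.e., replacing e by e − {s}). If H has an orientation (an assignment of a head vertex head(e') ∈ e' to each hyperedge e') that is Steiner rooted k-hyperarc-connected with respect to (T, r), then G also has an orientation that is Steiner rooted k-hyperarc-connected with respect to (T, r). -/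
/-- `IsDipath edge head t r as`: the arcs `as`, traversed in order, form a directed
path from `t` to `r`; at each step the current vertex is a tail of the arc (belongs
to the hyperedge but is not its head), and we move to the head of the arc. -/
def IsDipath {V ι : Type*} [DecidableEq V] (edge : ι → Finset V) (head : ι → V) :
    V → V → List ι → Prop
  | t, r, [] => t = r
  | t, r, a :: as => t ∈ edge a ∧ t ≠ head a ∧ IsDipath edge head (head a) r as

/-- The orientation `head` of the hypergraph `(E, edge)` is Steiner rooted
`k`-hyperarc-connected w.r.t. terminals `T` and root `r`: for every terminal
`t ≠ r` there are `k` pairwise hyperarc-disjoint paths from `t` to `r`, each with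
distinct vertices and hyperarcs. -/
def SteinerRootedConnected {V ι : Type*} [DecidableEq V] [DecidableEq ι]
    (E : Finset ι) (edge : ι → Finset V) (head : ι → V)
    (T : Finset V) (r : V) (k : ℕ) : Prop :=
  ∀ t ∈ T.erase r, ∃ P : Fin k → List ι,
    (∀ j, (∀ a ∈ P j, a ∈ E) ∧ IsDipath edge head t r (P j) ∧
      (P j).Nodup ∧ (t :: (P j).map head).Nodup) ∧
    (∀ j j' : Fin k, j ≠ j' → ∀ a ∈ P j, a ∉ P j')

theorem IsDipath.mono {V ι : Type*} [DecidableEq V] {edge edge' : ι → Finset V}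
    {head : ι → V} (hle : ∀ a, edge' a ⊆ edge a) :
    ∀ {t r : V} {as : List ι}, IsDipath edge' head t r as → IsDipath edge head t r as
  | _, _, [], h => h
  | _, _, _ :: _, ⟨ht, hne, h⟩ => ⟨hle _ ht, hne, IsDipath.mono hle h⟩

theorem SteinerRootedConnected.mono {V ι : Type*} [DecidableEq V] [DecidableEq ι]
    {E : Finset ι} {edge edge' : ι → Finset V} {head : ι → V} {T : Finset V} {r : V}
    {k : ℕ} (hle : ∀ a, edge' a ⊆ edge a)
    (h : SteinerRootedConnected E edge' head T r k) :
    SteinerRootedConnected E edge head T r k := by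
  intro t ht
  obtain ⟨P, hP, hdisj⟩ := h t ht
  refine ⟨P, fun j => ?_, hdisj⟩
  obtain ⟨hE, hpath, hnodup, hvert⟩ := hP j
  exact ⟨hE, hpath.mono hle, hnodup, hvert⟩

theorem Function.update_sdiff_apply_subset {α ι : Type*} [DecidableEq α] [DecidableEq ι]
    (f : ι → Finset α) (i : ι) (X : Finset α) (a : ι) :
    Function.update f i (f i \ X) a ⊆ f a := by
  rcases eq_or_ne a i with rfl | hne
  · simpa only [Function.update_self] using Finset.sdiff_subset
  · rw [Function.update_of_ne hne]

theorem lift_orientation_through_trim_general {V ι : Type*} [DecidableEq V]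
    [DecidableEq ι]
    (E : Finset ι) (edge : ι → Finset V) (T : Finset V) (r s : V) (k : ℕ)
    (i₀ : ι)
    (headH : ι → V)
    (hheadH : ∀ i ∈ E, headH i ∈ Function.update edge i₀ (edge i₀ \ {s}) i)
    (hH : SteinerRootedConnected E (Function.update edge i₀ (edge i₀ \ {s})) headH T r k) :
    ∃ headG : ι → V, (∀ i ∈ E, headG i ∈ edge i) ∧
      SteinerRootedConnected E edge headG T r k :=
  have htrim := Function.update_sdiff_apply_subset edge i₀ {s}
  ⟨headH, fun i hi => htrim i (hheadH i hi), hH.mono htrim⟩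

/-- Lifting a Steiner rooted `k`-hyperarc-connected orientation through an h-trim
operation at a Steiner vertex `s`: if the trimmed hypergraph (where the hyperedge
`edge i₀` is replaced by `edge i₀ − {s}`) has such an orientation, so does the
original hypergraph. -/
theorem lift_orientation_through_trim {V ι : Type*} [Fintype V] [DecidableEq V]
    [DecidableEq ι]
    (E : Finset ι) (edge : ι → Finset V) (T : Finset V) (r s : V) (k : ℕ)
    (hr : r ∈ T) (hs : s ∉ T)
    (i₀ : ι) (hi₀ : i₀ ∈ E) (hsi₀ : s ∈ edge i₀) (hcard : 2 ≤ (edge i₀).card)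
    (headH : ι → V)
    (hheadH : ∀ i ∈ E, headH i ∈ Function.update edge i₀ (edge i₀ \ {s}) i)
    (hH : SteinerRootedConnected E (Function.update edge i₀ (edge i₀ \ {s})) headH T r k) :
    ∃ headG : ι → V, (∀ i ∈ E, headG i ∈ edge i) ∧
      SteinerRootedConnected E edge headG T r k :=
  lift_orientation_through_trim_general E edge T r s k i₀ headH hheadH hH
end
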